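/- arXiv:2412.16907 — 2 statements merged into one kernel-verified Lean document; each statement's English description precedes it below -/
import Mathlib

section
/- Let m be a natural number and let X_1, X_2, X_3, Z_1, Z_2, Z_3, Z_4 be real numbers with Z_1 > 0, Z_2 ≥ Z_3 ≥ 0, Z_4 ≥ 0, Z_4^2 = Z_2 Z_3, 0 < Z_1 ≤ 1, X_1 ≥ 0. Define G = X_1^2 + 2X_2^2 + 4m X_3^2 and R_s = 8Z_2 + 4m(4m+8)Z_4 - 8m Z_3 - 2 Z_1 Z_2 - 4m Z_1 Z_3. Assume G + R_s ≤ 1 and X_2 = X_1 - 2(sqrt(Z_2/Z_1) - sqrt(Z_1 Z_2)) (i.e. F_2 = 0). Then X_1 + 2 sqrt(Z_1 Z_2) ≤ 1. -/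
theorem stmt_1 (m : ℕ) (X1 X2 X3 Z1 Z2 Z3 Z4 : ℝ)
    (hZ1pos : 0 < Z1) (hZ23 : Z2 ≥ Z3) (hZ3 : Z3 ≥ 0) (hZ4 : Z4 ≥ 0)
    (hcone : Z4^2 = Z2*Z3) (hZ1le : Z1 ≤ 1) (hX1 : X1 ≥ 0)
    (hQ : (X1^2 + 2*X2^2 + 4*(m:ℝ)*X3^2)
        + (8*Z2 + 4*(m:ℝ)*(4*(m:ℝ)+8)*Z4 - 8*(m:ℝ)*Z3 - 2*Z1*Z2 - 4*(m:ℝ)*Z1*Z3) ≤ 1)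
    (hF2 : X2 = X1 - 2*(Real.sqrt (Z2/Z1) - Real.sqrt (Z1*Z2))) :
    X1 + 2*Real.sqrt (Z1*Z2) ≤ 1 := by
  have hZ2 : (0:ℝ) ≤ Z2 := le_trans hZ3 hZ23
  set s := Real.sqrt (Z1*Z2) with hs
  set t := Real.sqrt (Z2/Z1) with ht
  have hs0 : 0 ≤ s := Real.sqrt_nonneg _
  have ht0 : 0 ≤ t := Real.sqrt_nonneg _
  have hs2 : s^2 = Z1*Z2 := Real.sq_sqrt (by positivity)
  have ht2 : t^2 = Z2/Z1 := Real.sq_sqrt (by positivity)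
  have ht2' : t^2 * Z1 = Z2 := by rw [ht2]; field_simp
  have hst : s * t = Z2 := by
    rw [hs, ht, ← Real.sqrt_mul (by positivity)]
    have : Z1 * Z2 * (Z2 / Z1) = Z2^2 := by field_simp
    rw [this, Real.sqrt_sq hZ2]
  have hZ43 : Z4 ≥ Z3 := by nlinarith
  have hm : (0:ℝ) ≤ (m:ℝ) := Nat.cast_nonneg m
  have hts : t ≥ s := by
    nlinarith [sq_nonneg (t - s), sq_nonneg (t + s), mul_pos hZ1pos hZ1pos]
  have hsq : (X1 + 2*s)^2 ≤ 1 := by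
    nlinarith [sq_nonneg (X1 - 2*t + s), sq_nonneg X3, mul_nonneg hm (mul_nonneg hm hZ3),
      mul_nonneg hm hZ3, mul_nonneg hm (sub_nonneg.2 hZ43),
      mul_nonneg (mul_nonneg hm hm) (sub_nonneg.2 hZ43), mul_nonneg hm (sq_nonneg X3)]
  nlinarith [sq_nonneg (X1 + 2*s), hs0, hX1]
end

section
/- Let ε, m ≥ 0 and suppose Q, H, W, G are differentiable real functions of η satisfying Q' = 2Q(G-(ε/2)W)+ε(H-1)W, H' = (H-1)(G-(ε/2)W-1)+Q, and W' = 2W(G-(ε/2)W). Define P = Q + 1 - H + (ε/2)W(1-H). Then P' = P(2G - (3ε/2)W - 1) + (1-H)((ε/2)W - 1)G. In particular, if along the solution one has G ≥ 0, H ≤ 1, W ≥ 0 and (ε/2)W ≤ 1/(4m+3) ≤ 1, then P' ≤ P(2G - (3ε/2)W - 1); hence if P < 0 at some time, P stays negative afterwards. -/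
/-- Barrier lemma: if `g' ≤ 0` wherever `g ≤ 0`, and `g a < 0`, then `g < 0` after `a`. -/
lemma stmt_16_barrier (g g' : ℝ → ℝ) (hg : ∀ t, HasDerivAt g (g' t) t)
    (h : ∀ t, g t ≤ 0 → g' t ≤ 0) (a : ℝ) (ha : g a < 0) :
    ∀ b, a ≤ b → g b < 0 := by
  intro b hab
  by_contra hb
  push_neg at hb
  have hcont : Continuous g := continuous_iff_continuousAt.2 fun t => (hg t).continuousAt
  set S : Set ℝ := {t | t ∈ Set.Icc a b ∧ 0 ≤ g t} with hS
  have hSne : S.Nonempty := ⟨b, ⟨hab, le_rfl⟩, hb⟩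
  have hSbdd : BddBelow S := ⟨a, fun t ht => ht.1.1⟩
  have hSclosed : IsClosed S :=
    (isClosed_Icc.inter (isClosed_le continuous_const hcont))
  have hsS : sInf S ∈ S := hSclosed.csInf_mem hSne hSbdd
  generalize hs : sInf S = s at hsS
  have hs' : ∀ t ∈ S, s ≤ t := fun t ht => hs ▸ csInf_le hSbdd ht
  have has : a ≤ s := hsS.1.1
  have hneg : ∀ t, a ≤ t → t < s → g t < 0 := by
    intro t h1 h2
    by_contra ht
    push_neg at ht
    have : t ∈ S := ⟨⟨h1, h2.le.trans hsS.1.2⟩, ht⟩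
    exact absurd (hs' t this) (not_le.2 h2)
  have ha_lt : a < s := lt_of_le_of_ne has (by rintro rfl; exact absurd hsS.2 (not_le.2 ha))
  have hanti : AntitoneOn g (Set.Icc a s) := by
    apply antitoneOn_of_deriv_nonpos (convex_Icc a s) hcont.continuousOn
    · exact fun t _ => (hg t).differentiableAt.differentiableWithinAt
    · intro t ht
      rw [interior_Icc] at ht
      rw [(hg t).deriv]
      exact h t (hneg t ht.1.le ht.2).le
  have : g s ≤ g a := hanti ⟨le_rfl, has⟩ ⟨has, le_rfl⟩ has
  linarith [hsS.2]

/-- Identity (4.12) and invariance of negativity of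
`P = Q + 1 - H + (ε/2) W (1 - H)`. -/
theorem stmt_16 (m : ℕ) (ε : ℝ) (hε : 0 ≤ ε) (Q H W G : ℝ → ℝ)
    (hQ : ∀ η, HasDerivAt Q
      (2*Q η*(G η - (ε/2)*W η) + ε*(H η - 1)*W η) η)
    (hH : ∀ η, HasDerivAt H
      ((H η - 1)*(G η - (ε/2)*W η - 1) + Q η) η)
    (hW : ∀ η, HasDerivAt W (2*W η*(G η - (ε/2)*W η)) η) :
    (∀ η, HasDerivAt (fun t => Q t + 1 - H t + (ε/2)*W t*(1 - H t))
      ((Q η + 1 - H η + (ε/2)*W η*(1 - H η))*(2*G η - (3*ε/2)*W η - 1)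
        + (1 - H η)*((ε/2)*W η - 1)*G η) η)
    ∧ ((∀ η, G η ≥ 0 ∧ H η ≤ 1 ∧ W η ≥ 0 ∧ (ε/2)*W η ≤ 1/(4*(m:ℝ)+3)) →
        (∀ η, deriv (fun t => Q t + 1 - H t + (ε/2)*W t*(1 - H t)) η
          ≤ (Q η + 1 - H η + (ε/2)*W η*(1 - H η))*(2*G η - (3*ε/2)*W η - 1))
        ∧ (∀ η₀, Q η₀ + 1 - H η₀ + (ε/2)*W η₀*(1 - H η₀) < 0 →
            ∀ η ≥ η₀, Q η + 1 - H η + (ε/2)*W η*(1 - H η) < 0)) := by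
  set P : ℝ → ℝ := fun t => Q t + 1 - H t + (ε/2)*W t*(1 - H t) with hPdef
  have hP : ∀ η, HasDerivAt P
      ((Q η + 1 - H η + (ε/2)*W η*(1 - H η))*(2*G η - (3*ε/2)*W η - 1)
        + (1 - H η)*((ε/2)*W η - 1)*G η) η := by
    intro η
    have h := (((hQ η).add_const 1).sub (hH η)).add
      ((((hW η).const_mul (ε/2))).mul ((hH η).const_sub 1))
    exact h.congr_deriv (by ring)
  refine ⟨hP, ?_⟩
  intro hyp
  -- the bound `(ε/2) W ≤ 1`
  have hW1 : ∀ η, (ε/2)*W η ≤ 1 := by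
    intro η
    have h1 : (1:ℝ)/(4*(m:ℝ)+3) ≤ 1 := by
      rw [div_le_one (by positivity)]
      have : (0:ℝ) ≤ (m:ℝ) := Nat.cast_nonneg m
      linarith
    exact (hyp η).2.2.2.trans h1
  -- the extra term is nonpositive
  have hextra : ∀ η, (1 - H η)*((ε/2)*W η - 1)*G η ≤ 0 := by
    intro η
    obtain ⟨hG, hH1, _, _⟩ := hyp η
    have t1 : (1 - H η)*((ε/2)*W η - 1) ≤ 0 :=
      mul_nonpos_of_nonneg_of_nonpos (by linarith) (by linarith [hW1 η])
    exact mul_nonpos_of_nonpos_of_nonneg t1 hG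
  constructor
  · intro η
    rw [(hP η).deriv]
    linarith [hextra η]
  · intro η₀ hP0 η hη
    -- continuous coefficient `c = (3ε/2) W + 1`
    have hWc : Continuous W := continuous_iff_continuousAt.2 fun t => (hW t).continuousAt
    set c : ℝ → ℝ := fun t => (3*ε/2)*W t + 1 with hcdef
    have hc : Continuous c := by continuity
    set F : ℝ → ℝ := fun x => ∫ t in η₀..x, c t with hFdef
    have hF : ∀ x, HasDerivAt F (c x) x := fun x =>
      intervalIntegral.integral_hasDerivAt_right (hc.intervalIntegrable _ _)
        (hc.stronglyMeasurableAtFilter _ _) hc.continuousAt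
    set g : ℝ → ℝ := fun t => P t * Real.exp (F t) with hgdef
    set g' : ℝ → ℝ := fun t =>
      ((Q t + 1 - H t + (ε/2)*W t*(1 - H t))*(2*G t - (3*ε/2)*W t - 1)
        + (1 - H t)*((ε/2)*W t - 1)*G t) * Real.exp (F t)
      + P t * (Real.exp (F t) * c t) with hg'def
    have hg : ∀ t, HasDerivAt g (g' t) t := fun t => (hP t).mul ((hF t).exp)
    have hbar : ∀ t, g t ≤ 0 → g' t ≤ 0 := by
      intro t hgt
      have hE : 0 < Real.exp (F t) := Real.exp_pos _
      have hgt' : P t * Real.exp (F t) ≤ 0 := hgt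
      have hPt : P t ≤ 0 := by
        by_contra h
        push_neg at h
        nlinarith
      obtain ⟨hG, hH1, hW0, _⟩ := hyp t
      have hx : (Q t + 1 - H t + (ε/2)*W t*(1 - H t))*(2*G t - (3*ε/2)*W t - 1)
          + (1 - H t)*((ε/2)*W t - 1)*G t + P t * c t ≤ 0 := by
        have h2 : (Q t + 1 - H t + (ε/2)*W t*(1 - H t)) * (2*G t) ≤ 0 :=
          mul_nonpos_of_nonpos_of_nonneg hPt (by linarith)
        have h3 := hextra t
        show (Q t + 1 - H t + (ε/2)*W t*(1 - H t))*(2*G t - (3*ε/2)*W t - 1)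
          + (1 - H t)*((ε/2)*W t - 1)*G t
          + (Q t + 1 - H t + (ε/2)*W t*(1 - H t)) * ((3*ε/2)*W t + 1) ≤ 0
        nlinarith [h2, h3]
      have : g' t = Real.exp (F t) *
          ((Q t + 1 - H t + (ε/2)*W t*(1 - H t))*(2*G t - (3*ε/2)*W t - 1)
            + (1 - H t)*((ε/2)*W t - 1)*G t + P t * c t) := by
        simp only [hg'def]; ring
      rw [this]
      exact mul_nonpos_of_nonneg_of_nonpos hE.le hx
    have hga : g η₀ < 0 := by
      have : F η₀ = 0 := intervalIntegral.integral_same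
      simp only [hgdef, this, Real.exp_zero, mul_one]
      exact hP0
    have hgb : g η < 0 := stmt_16_barrier g g' hg hbar η₀ hga η hη
    have hE : 0 < Real.exp (F η) := Real.exp_pos _
    by_contra h
    push_neg at h
    have : 0 ≤ g η := mul_nonneg h hE.le
    linarith
end
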